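/- Define a bracket on the ℂ-span of {L_m, W_m, G_m : m ∈ ℤ} by [L_m,L_n] = (n−m)L_{m+n}, [L_m,W_n] = (m+n)W_{m+n}, [L_m,G_n] = n·G_{m+n}, [G_m,G_n] = (m+n)W_{m+n}, [W_m,W_n] = [W_m,G_n] = 0, with L_m,W_m even and G_m odd. This bracket satisfies the super Jacobi identity. -/
import Mathlib


/-- Basis of the annihilation superalgebra 𝒮̄⁰: `L m`, `W m` even, `G m` odd, `m ∈ ℤ`. -/
inductive AB : Type
  | L : ℤ → AB
  | W : ℤ → AB
  | G : ℤ → AB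
  deriving DecidableEq

/-- Parity: `L, W` even, `G` odd. -/
def parity : AB → ℕ
  | AB.G _ => 1
  | _ => 0

open AB in
/-- The bracket of 𝒮̄⁰ on basis elements. -/
noncomputable def br : AB → AB → (AB →₀ ℂ)
  | L m, L n => Finsupp.single (L (m + n)) ((n : ℂ) - m)
  | L m, W n => Finsupp.single (W (m + n)) ((m : ℂ) + n)
  | W n, L m => -Finsupp.single (W (m + n)) ((m : ℂ) + n)
  | L m, G n => Finsupp.single (G (m + n)) (n : ℂ)
  | G n, L m => -Finsupp.single (G (m + n)) (n : ℂ)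
  | G m, G n => Finsupp.single (W (m + n)) ((m : ℂ) + n)
  | _, _ => 0

/-- Bilinear extension of the bracket in the second argument. -/
noncomputable def brL (x : AB) (v : AB →₀ ℂ) : AB →₀ ℂ := v.sum fun b c => c • br x b

/-- Bilinear extension of the bracket in the first argument. -/
noncomputable def brR (v : AB →₀ ℂ) (z : AB) : AB →₀ ℂ := v.sum fun b c => c • br b z

lemma brL_single (x b : AB) (c : ℂ) : brL x (Finsupp.single b c) = c • br x b := by
  simp [brL, Finsupp.sum_single_index]

lemma brL_zero (x : AB) : brL x (0 : AB →₀ ℂ) = 0 := by simp [brL]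

lemma brL_neg (x b : AB) (c : ℂ) : brL x (-Finsupp.single b c) = -(c • br x b) := by
  rw [← Finsupp.single_neg, brL_single, neg_smul]

lemma brR_single (b z : AB) (c : ℂ) : brR (Finsupp.single b c) z = c • br b z := by
  simp [brR, Finsupp.sum_single_index]

lemma brR_zero (z : AB) : brR (0 : AB →₀ ℂ) z = 0 := by simp [brR]

lemma brR_neg (b z : AB) (c : ℂ) : brR (-Finsupp.single b c) z = -(c • br b z) := by
  rw [← Finsupp.single_neg, brR_single, neg_smul]

/-- The bracket of 𝒮̄⁰ satisfies the super Jacobi identity. -/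
theorem stmt5 :
    ∀ x y z : AB,
      brL x (br y z) = brR (br x y) z + (-1 : ℂ) ^ (parity x * parity y) • brL y (br x z) := by
  intro x y z
  cases x <;> cases y <;> cases z <;>
    simp only [br, parity, brL_single, brL_zero, brL_neg, brR_single, brR_zero, brR_neg,
      Finsupp.smul_single, smul_smul, smul_zero, neg_zero, add_zero, zero_add, smul_neg,
      Finsupp.single_neg, neg_neg, pow_zero, pow_one, one_smul, mul_one, mul_zero, mul_neg,
      neg_smul, one_mul, neg_one_smul, add_assoc, add_comm, add_left_comm] <;>
    ext b <;>
    simp only [Finsupp.single_apply, Finsupp.add_apply, Finsupp.neg_apply, Finsupp.coe_zero,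
      Pi.zero_apply, smul_eq_mul] <;>
    split_ifs <;> push_cast <;> ring
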